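/- Let g : ℕ → {0,1} be a pretentious multiplicative function. Then for every k ≥ 1 and all distinct h₁, …, h_k ∈ ℕ, the limit lim_{x→∞} (1/x) Σ_{n≤x} g(n+h₁)⋯g(n+h_k) exists; equivalently (since g takes values in {0,1}, so all correlations of indicator functions of cylinder sets converge), g has a unique Furstenberg system. -/

import Mathlib

open Filter Finset Topology

noncomputable section

/-- Truncated pretentious distance `𝔻(g₁,g₂; y, x)`:
`(∑_{p prime, y ≤ p ≤ x} (1 - Re(g₁(p) conj(g₂(p))))/p)^{1/2}`. -/
def pretDist (g₁ g₂ : ℕ → ℂ) (y x : ℝ) : ℝ :=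
  Real.sqrt (∑ p ∈ (Finset.range (Nat.floor x + 1)).filter
      (fun p : ℕ => p.Prime ∧ y ≤ (p : ℝ)),
    (1 - (g₁ p * (starRingEnd ℂ) (g₂ p)).re) / p)

/-- `𝔻(g₁,g₂; x) := 𝔻(g₁,g₂; 1, x)`. -/
def pretDistTo (g₁ g₂ : ℕ → ℂ) (x : ℝ) : ℝ := pretDist g₁ g₂ 1 x

/-- The twisted Dirichlet character `n ↦ χ(n) n^{it}`. -/
def charTwist {q : ℕ} (χ : DirichletCharacter ℂ q) (t : ℝ) : ℕ → ℂ :=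
  fun n => χ (n : ZMod q) * (n : ℂ) ^ ((t : ℂ) * Complex.I)

/-- A multiplicative function in the number-theoretic sense. -/
def IsMultFn (f : ℕ → ℂ) : Prop :=
  f 1 = 1 ∧ ∀ m n : ℕ, Nat.Coprime m n → f (m * n) = f m * f n

/-- `f` is pretentious: `𝔻(f, χ(n)n^{it}; ∞) < ∞` for some Dirichlet character `χ`
and real `t`. -/
def IsPretentious (f : ℕ → ℂ) : Prop :=
  ∃ (q : ℕ) (χ : DirichletCharacter ℂ q) (t : ℝ) (C : ℝ),
    ∀ x : ℝ, pretDistTo f (charTwist χ t) x ≤ C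

/-- Upper logarithmic density `δ_log^+`. -/
def upperLogDens (A : Set ℕ) : ℝ :=
  Filter.limsup (fun X : ℕ =>
    (Real.log X)⁻¹ * ∑ n ∈ Finset.Icc 1 X, Set.indicator A (fun n => (n : ℝ)⁻¹) n)
    Filter.atTop

/-- Upper double-logarithmic density `δ_loglog^+`. -/
def upperLogLogDens (A : Set ℕ) : ℝ :=
  Filter.limsup (fun X : ℕ =>
    (Real.log (Real.log X))⁻¹ *
      ∑ n ∈ Finset.Icc 2 X, Set.indicator A (fun n => ((n : ℝ) * Real.log n)⁻¹) n)
    Filter.atTop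

/-- Lower logarithmic density `δ_log^-`. -/
def lowerLogDens (A : Set ℕ) : ℝ :=
  Filter.liminf (fun X : ℕ =>
    (Real.log X)⁻¹ * ∑ n ∈ Finset.Icc 1 X, Set.indicator A (fun n => (n : ℝ)⁻¹) n)
    Filter.atTop

/-- Lower asymptotic density `d^-`. -/
def lowerAsympDens (A : Set ℕ) : ℝ :=
  Filter.liminf (fun X : ℕ =>
    (∑ n ∈ Finset.Icc 1 X, Set.indicator A (fun _ => (1 : ℝ)) n) / X) Filter.atTop

/-- The Cesàro average `(1/x) ∑_{n ≤ x} F(n)`. -/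
def cesaroAvg (F : ℕ → ℂ) (x : ℕ) : ℂ := (∑ n ∈ Finset.Icc 1 x, F n) / x

/-- `inf_{|t| ≤ X^A} min_{χ mod q, q ≤ (log X)^A} 𝔻(f, χ(n)n^{it}; X)²`. -/
def minTwistDist (f : ℕ → ℂ) (A X : ℝ) : ℝ :=
  sInf {d : ℝ | ∃ (t : ℝ) (q : ℕ) (χ : DirichletCharacter ℂ q),
    |t| ≤ X ^ A ∧ (q : ℝ) ≤ (Real.log X) ^ A ∧
    d = (pretDistTo f (charTwist χ t) X) ^ 2}

/-- `f` is moderately non-pretentious. -/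
def ModeratelyNonPretentious (f : ℕ → ℂ) : Prop :=
  ¬ IsPretentious f ∧ ∃ A : ℝ, 1 ≤ A ∧
    Filter.Tendsto (fun X : ℝ => (Real.log (Real.log X))⁻¹ * minTwistDist f A X)
      Filter.atTop (nhds 0)

/-!
Since `g` is `{0,1}`-valued, pretentiousness forces `∑_{g(p) = 0} 1/p < ∞`. Given `δ > 0`, choose
`y` with `∑_{p > y} (1/p² + [g(p) = 0]/p) < δ` and then `m` with `y / 2^m < δ`. Outside a set of `n`
of upper density `O(δ)` (those divisible by `p^m` with `p ≤ y`, by `p²` with `p > y`, or by a prime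
`p > y` with `g(p) = 0`), multiplicativity gives `g(n) = g(gcd(y!^m, n))`. The latter is periodic,
so its correlations have Cesàro limits, and the correlation averages of `g` stay within `O(kδ)`
of them. Hence the averages of `g` form a Cauchy sequence.
-/

theorem exists_tendsto_of_forall_eventually_dist_le {α : Type*} [PseudoMetricSpace α]
    [CompleteSpace α] {A : ℕ → α}
    (h : ∀ ε > 0, ∃ B : ℕ → α, (∃ L, Tendsto B atTop (𝓝 L)) ∧ ∀ᶠ x in atTop, dist (A x) (B x) ≤ ε) :
    ∃ L, Tendsto A atTop (𝓝 L) := by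
  refine cauchySeq_tendsto_of_complete (Metric.cauchySeq_iff.2 fun ε hε => ?_)
  obtain ⟨B, ⟨L, hB⟩, hAB⟩ := h (ε / 4) (by positivity)
  obtain ⟨N₁, hN₁⟩ := Metric.cauchySeq_iff.1 hB.cauchySeq (ε / 4) (by positivity)
  obtain ⟨N₂, hN₂⟩ := eventually_atTop.1 hAB
  refine ⟨max N₁ N₂, fun a ha b hb => ?_⟩
  have ha₁ := hN₂ a (le_of_max_le_right ha)
  have hb₁ := hN₂ b (le_of_max_le_right hb)
  have hab := hN₁ a (le_of_max_le_left ha) b (le_of_max_le_left hb)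
  calc dist (A a) (A b) ≤ dist (A a) (B a) + dist (B a) (B b) + dist (B b) (A b) :=
        dist_triangle4 _ _ _ _
    _ < ε := by rw [dist_comm (B b)]; linarith

theorem Function.Periodic.tendsto_sum_range_div {F : ℕ → ℝ} {Q : ℕ} (hF : Periodic F Q)
    (hQ : Q ≠ 0) :
    Tendsto (fun x : ℕ => (∑ n ∈ range x, F n) / x) atTop (𝓝 ((∑ n ∈ range Q, F n) / Q)) := by
  set S := ∑ n ∈ range Q, F n
  -- The deviation from linear growth is periodic, hence bounded.
  set D : ℕ → ℝ := fun x => ∑ n ∈ range x, F n - x * (S / Q)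
  have hD : Periodic D Q := fun x => by
    have hF' : ∀ i, F (Q + i) = F i := fun i => by rw [add_comm]; exact hF i
    simp only [D, add_comm x Q, sum_range_add, hF']
    push_cast
    field_simp
    ring
  have hD_bdd : ∀ x, ‖D x‖ ≤ ∑ i ∈ range Q, ‖D i‖ := fun x => by
    rw [← hD.map_mod_nat x]
    exact single_le_sum (f := fun i => ‖D i‖) (fun i _ => norm_nonneg _)
      (mem_range.2 (Nat.mod_lt x (Nat.pos_of_ne_zero hQ)))
  have hD_lim : Tendsto (fun x : ℕ => D x / x) atTop (𝓝 0) :=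
    squeeze_zero_norm (fun x => by rw [norm_div, Real.norm_natCast]; gcongr; exact hD_bdd x)
      (tendsto_const_div_atTop_nhds_zero_nat _)
  rw [← add_zero (S / Q)]
  refine (hD_lim.const_add (S / Q)).congr' ?_
  filter_upwards [eventually_ne_atTop 0] with x hx
  simp only [D]
  field_simp
  ring

theorem Function.Periodic.tendsto_sum_Icc_div {F : ℕ → ℝ} {Q : ℕ} (hF : Periodic F Q)
    (hQ : Q ≠ 0) :
    Tendsto (fun x : ℕ => (∑ n ∈ Icc 1 x, F n) / x) atTop (𝓝 ((∑ n ∈ Icc 1 Q, F n) / Q)) := by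
  have hIcc : ∀ x, ∑ n ∈ Icc 1 x, F n = ∑ n ∈ range x, F (n + 1) := fun x => by
    rw [range_eq_Ico, sum_Ico_add', ← Ico_add_one_right_eq_Icc, zero_add]
  simp only [hIcc]
  exact (hF.add_const 1).tendsto_sum_range_div hQ

theorem Summable.exists_forall_sum_lt {u : ℕ → ℝ} (hu : Summable u) {δ : ℝ} (hδ : 0 < δ) :
    ∃ y, ∀ t : Finset ℕ, (∀ p ∈ t, y < p) → ∑ p ∈ t, u p < δ := by
  obtain ⟨s, hs⟩ := hu.vanishing (Iio_mem_nhds hδ)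
  exact ⟨s.sup id, fun t ht => hs t (disjoint_left.2 fun p hpt hps =>
    (ht p hpt).not_ge (le_sup (f := id) hps))⟩

theorem Nat.card_filter_dvd_add_le (x c d : ℕ) : #{n ∈ Icc 1 x | d ∣ n + c} ≤ (x + c) / d := by
  rw [← Nat.Ioc_filter_dvd_card_eq_div]
  refine card_le_card_of_injOn (· + c) (fun n hn => ?_) (fun a _ b _ hab => by simpa using hab)
  simp only [coe_filter, mem_Icc, Set.mem_ofPred_eq, mem_Ioc] at hn ⊢
  omega

open Classical in
theorem Nat.card_filter_exists_prime_dvd_add_le (M : ℕ → ℕ) (hM : ∀ p, p.Prime → p ∣ M p)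
    (x c : ℕ) :
    (#{n ∈ Icc 1 x | ∃ p, p.Prime ∧ M p ∣ n + c} : ℝ) ≤
      (x + c) * ∑ p ∈ range (x + c + 1) with p.Prime, (M p : ℝ)⁻¹ := by
  have hsub : {n ∈ Icc 1 x | ∃ p, p.Prime ∧ M p ∣ n + c} ⊆
      {p ∈ range (x + c + 1) | p.Prime}.biUnion fun p => {n ∈ Icc 1 x | M p ∣ n + c} := by
    intro n hn
    simp only [mem_filter, mem_Icc, mem_biUnion, mem_range] at hn ⊢
    obtain ⟨hn, p, hp, hdvd⟩ := hn
    have := Nat.le_of_dvd (by omega) ((hM p hp).trans hdvd)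
    exact ⟨p, ⟨by omega, hp⟩, hn, hdvd⟩
  calc (#{n ∈ Icc 1 x | ∃ p, p.Prime ∧ M p ∣ n + c} : ℝ)
      ≤ ∑ p ∈ range (x + c + 1) with p.Prime, (#{n ∈ Icc 1 x | M p ∣ n + c} : ℝ) := by
        exact_mod_cast (card_le_card hsub).trans card_biUnion_le
    _ ≤ ∑ p ∈ range (x + c + 1) with p.Prime, ((x + c : ℕ) / M p : ℝ) := by
        gcongr with p
        exact (Nat.cast_le.2 (card_filter_dvd_add_le x c (M p))).trans Nat.cast_div_le
    _ = (x + c) * ∑ p ∈ range (x + c + 1) with p.Prime, (M p : ℝ)⁻¹ := by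
        rw [mul_sum]; push_cast; rfl

theorem Finset.abs_prod_sub_prod_le_card {ι : Type*} (s : Finset ι) {a b : ι → ℝ}
    (ha : ∀ i, a i ∈ Set.Icc 0 1) (hb : ∀ i, b i ∈ Set.Icc 0 1) :
    |∏ i ∈ s, a i - ∏ i ∈ s, b i| ≤ #{i ∈ s | a i ≠ b i} := by
  classical
  have hmem : ∀ c : ι → ℝ, (∀ i, c i ∈ Set.Icc 0 1) → ∏ i ∈ s, c i ∈ Set.Icc (0 : ℝ) 1 :=
    fun c hc => ⟨prod_nonneg fun i _ => (hc i).1,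
      prod_le_one (fun i _ => (hc i).1) fun i _ => (hc i).2⟩
  rcases eq_or_ne #{i ∈ s | a i ≠ b i} 0 with h | h
  · rw [card_eq_zero, filter_eq_empty_iff] at h
    rw [prod_congr rfl fun i hi => not_not.1 (h hi), sub_self, abs_zero]
    positivity
  · obtain ⟨ha₀, ha₁⟩ := hmem a ha
    obtain ⟨hb₀, hb₁⟩ := hmem b hb
    have : (1 : ℝ) ≤ #{i ∈ s | a i ≠ b i} := by exact_mod_cast Nat.one_le_iff_ne_zero.2 h
    rw [abs_le]
    constructor <;> linarith

theorem abs_sum_prod_sub_sum_prod_le {ι : Type*} [Fintype ι] {f G : ℕ → ℝ}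
    (hf : ∀ n, f n ∈ Set.Icc 0 1) (hG : ∀ n, G n ∈ Set.Icc 0 1) (h : ι → ℕ) (x : ℕ) :
    |∑ n ∈ Icc 1 x, ∏ j, f (n + h j) - ∑ n ∈ Icc 1 x, ∏ j, G (n + h j)| ≤
      ∑ j, (#{n ∈ Icc 1 x | f (n + h j) ≠ G (n + h j)} : ℝ) := by
  rw [← sum_sub_distrib]
  calc _ ≤ ∑ n ∈ Icc 1 x, |∏ j, f (n + h j) - ∏ j, G (n + h j)| := abs_sum_le_sum_abs _ _
    _ ≤ ∑ n ∈ Icc 1 x, (#{j | f (n + h j) ≠ G (n + h j)} : ℝ) :=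
        sum_le_sum fun n _ => abs_prod_sub_prod_le_card _ (fun j => hf _) fun j => hG _
    _ = ∑ j, (#{n ∈ Icc 1 x | f (n + h j) ≠ G (n + h j)} : ℝ) := by
        exact_mod_cast sum_card_bipartiteAbove_eq_sum_card_bipartiteBelow
          (fun n j => f (n + h j) ≠ G (n + h j))

theorem Nat.apply_eq_apply_of_apply_ordProj_eq {β : Type*} [CommMonoid β] {g : ℕ → β}
    (hg1 : g 1 = 1) (hmul : ∀ m n, m.Coprime n → g (m * n) = g m * g n) {a b : ℕ} (ha : a ≠ 0)
    (hb : b ≠ 0) (h : ∀ p, p.Prime → g (p ^ a.factorization p) = g (p ^ b.factorization p)) :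
    g a = g b := by
  have hg0 : ∀ p ∈ a.primeFactors ∪ b.primeFactors, g (p ^ 0) = 1 := fun _ _ => by
    rw [pow_zero, hg1]
  rw [multiplicative_factorization g hmul hg1 ha, multiplicative_factorization g hmul hg1 hb,
    Finsupp.prod_of_support_subset _ (a.support_factorization ▸ subset_union_left) _ hg0,
    Finsupp.prod_of_support_subset _ (b.support_factorization ▸ subset_union_right) _ hg0]
  exact prod_congr rfl fun p hp => h p (by
    rcases mem_union.1 hp with hp | hp <;> exact prime_of_mem_primeFactors hp)

theorem norm_charTwist_le_one {q : ℕ} (χ : DirichletCharacter ℂ q) (t : ℝ) {n : ℕ} (hn : n ≠ 0) :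
    ‖charTwist χ t n‖ ≤ 1 := by
  rw [charTwist, norm_mul, Complex.norm_natCast_cpow_of_pos (Nat.pos_of_ne_zero hn)]
  simpa using χ.norm_le_one (n : ZMod q)

theorem summable_inv_prime_of_isPretentious {f : ℕ → ℂ} (hf : ∀ n, ‖f n‖ ≤ 1)
    (hpret : IsPretentious f) :
    Summable fun p : ℕ => if p.Prime ∧ f p = 0 then (p : ℝ)⁻¹ else 0 := by
  obtain ⟨q, χ, t, C, hC⟩ := hpret
  set a : ℕ → ℝ := fun p =>
    if p.Prime ∧ (1 : ℝ) ≤ p then (1 - (f p * starRingEnd ℂ (charTwist χ t p)).re) / p else 0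
  have ha : ∀ p, 0 ≤ a p := fun p => by
    simp only [a]
    split_ifs with hp
    · refine div_nonneg (sub_nonneg.2 ?_) p.cast_nonneg
      calc _ ≤ ‖f p * starRingEnd ℂ (charTwist χ t p)‖ := Complex.re_le_norm _
        _ ≤ 1 := by
          rw [norm_mul, Complex.norm_conj]
          exact mul_le_one₀ (hf p) (norm_nonneg _) (norm_charTwist_le_one χ t hp.1.ne_zero)
    · rfl
  have hpartial : ∀ N, ∑ p ∈ range (N + 1), a p = pretDistTo f (charTwist χ t) N ^ 2 := fun N => by
    rw [pretDistTo, pretDist, Nat.floor_natCast, Real.sq_sqrt, sum_filter]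
    simpa only [sum_filter] using sum_nonneg fun p _ => ha p
  have hsa : Summable a := summable_of_sum_range_le ha (c := C ^ 2) fun N => by
    calc ∑ p ∈ range N, a p ≤ ∑ p ∈ range (N + 1), a p := by
          rw [sum_range_succ]; linarith [ha N]
      _ ≤ C ^ 2 := by
          rw [hpartial]
          exact pow_le_pow_left₀ (Real.sqrt_nonneg _) (hC N) 2
  refine hsa.of_nonneg_of_le (fun p => by positivity) fun p => ?_
  split_ifs with hp
  · simp [a, hp.2, hp.1, hp.1.one_lt.le]
  · exact ha p

section Truncation

variable (g : ℕ → ℝ)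

def truncationModulus (y m p : ℕ) : ℕ := if p ≤ y then p ^ m else if g p = 0 then p else p ^ 2

theorem dvd_truncationModulus {m : ℕ} (hm : m ≠ 0) (y p : ℕ) : p ∣ truncationModulus g y m p := by
  unfold truncationModulus
  split_ifs
  exacts [dvd_pow_self p hm, dvd_rfl, dvd_pow_self p two_ne_zero]

variable {g}

theorem apply_eq_apply_gcd_factorial_pow (hvals : ∀ n, g n = 0 ∨ g n = 1) (hg1 : g 1 = 1)
    (hmul : ∀ m n, m.Coprime n → g (m * n) = g m * g n) {y m n : ℕ} (hn : n ≠ 0)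
    (hM : ∀ p, p.Prime → ¬ truncationModulus g y m p ∣ n) :
    g n = g (Nat.gcd (y.factorial ^ m) n) := by
  have hQ : y.factorial ^ m ≠ 0 := pow_ne_zero _ y.factorial_ne_zero
  refine Nat.apply_eq_apply_of_apply_ordProj_eq hg1 hmul hn (Nat.gcd_ne_zero_right hn)
    fun p hp => ?_
  have hMp := hM p hp
  rw [Nat.factorization_gcd hQ hn, Finsupp.inf_apply]
  unfold truncationModulus at hMp
  by_cases hpy : p ≤ y
  · rw [if_pos hpy, hp.pow_dvd_iff_le_factorization hn, not_le] at hMp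
    have hle : m ≤ (y.factorial ^ m).factorization p :=
      (hp.pow_dvd_iff_le_factorization hQ).1 (pow_dvd_pow_of_dvd (hp.dvd_factorial.2 hpy) m)
    rw [inf_of_le_right (by omega)]
  have hQp : (y.factorial ^ m).factorization p = 0 :=
    Nat.factorization_eq_zero_of_not_dvd fun hd => hpy (hp.dvd_factorial.1 (hp.dvd_of_dvd_pow hd))
  rw [hQp, Nat.zero_min, pow_zero, hg1]
  rw [if_neg hpy] at hMp
  split_ifs at hMp with hgp
  · rw [Nat.factorization_eq_zero_of_not_dvd hMp, pow_zero, hg1]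
  · rw [hp.pow_dvd_iff_le_factorization hn, not_le] at hMp
    interval_cases n.factorization p
    · rw [pow_zero, hg1]
    · rw [pow_one, (hvals p).resolve_left hgp]

theorem card_filter_ne_apply_gcd_factorial_pow_le (hvals : ∀ n, g n = 0 ∨ g n = 1)
    (hg1 : g 1 = 1) (hmul : ∀ m n, m.Coprime n → g (m * n) = g m * g n) {y m : ℕ} (hm : m ≠ 0)
    {δ : ℝ} (hδ : ∀ s : Finset ℕ, ∑ p ∈ s with p.Prime, (truncationModulus g y m p : ℝ)⁻¹ ≤ δ)
    (x c : ℕ) :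
    (#{n ∈ Icc 1 x | g (n + c) ≠ g (Nat.gcd (y.factorial ^ m) (n + c))} : ℝ) ≤ (x + c) * δ := by
  classical
  have hsub : {n ∈ Icc 1 x | g (n + c) ≠ g (Nat.gcd (y.factorial ^ m) (n + c))} ⊆
      {n ∈ Icc 1 x | ∃ p, p.Prime ∧ truncationModulus g y m p ∣ n + c} := by
    intro n hn
    simp only [mem_filter, mem_Icc] at hn ⊢
    refine ⟨hn.1, ?_⟩
    by_contra! hM
    exact hn.2 (apply_eq_apply_gcd_factorial_pow hvals hg1 hmul (by omega) hM)
  calc _ ≤ (#{n ∈ Icc 1 x | ∃ p, p.Prime ∧ truncationModulus g y m p ∣ n + c} : ℝ) := by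
        exact_mod_cast card_le_card hsub
    _ ≤ (x + c) * ∑ p ∈ range (x + c + 1) with p.Prime, (truncationModulus g y m p : ℝ)⁻¹ :=
        Nat.card_filter_exists_prime_dvd_add_le _ (fun p _ => dvd_truncationModulus g hm y p) x c
    _ ≤ (x + c) * δ := by gcongr; exact hδ _

variable (g) in
theorem exists_sum_inv_truncationModulus_le
    (hsum : Summable fun p : ℕ => if p.Prime ∧ g p = 0 then (p : ℝ)⁻¹ else 0) {δ : ℝ}
    (hδ : 0 < δ) :
    ∃ y m, m ≠ 0 ∧ ∀ s : Finset ℕ, ∑ p ∈ s with p.Prime, (truncationModulus g y m p : ℝ)⁻¹ ≤ δ := by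
  obtain ⟨y, hy⟩ :=
    (hsum.add (Real.summable_nat_pow_inv.2 one_lt_two)).exists_forall_sum_lt (half_pos hδ)
  have hlim : Tendsto (fun m : ℕ => (y + 1 : ℝ) * ((2 : ℝ) ^ m)⁻¹) atTop (𝓝 0) := by
    simpa using (tendsto_pow_atTop_atTop_of_one_lt one_lt_two).inv_tendsto_atTop.const_mul
      (y + 1 : ℝ)
  obtain ⟨m, hm, hm0⟩ :=
    ((hlim.eventually (gt_mem_nhds (half_pos hδ))).and (eventually_ne_atTop 0)).exists
  refine ⟨y, m, hm0, fun s => ?_⟩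
  set P := {p ∈ s | p.Prime}
  rw [← sum_filter_add_sum_filter_not P (· ≤ y)]
  have hsmall : ∑ p ∈ P with p ≤ y, (truncationModulus g y m p : ℝ)⁻¹ ≤
      (y + 1 : ℝ) * ((2 : ℝ) ^ m)⁻¹ := by
    have hcard : #{p ∈ P | p ≤ y} ≤ y + 1 :=
      (card_le_card fun p hp => mem_range.2 (Nat.lt_succ_of_le (mem_filter.1 hp).2)).trans
        (card_range _).le
    calc _ ≤ ∑ p ∈ P with p ≤ y, ((2 : ℝ) ^ m)⁻¹ := by
          refine sum_le_sum fun p hp => ?_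
          simp only [P, mem_filter] at hp
          rw [truncationModulus, if_pos hp.2]
          push_cast
          gcongr
          exact_mod_cast hp.1.2.two_le
      _ ≤ (y + 1 : ℝ) * ((2 : ℝ) ^ m)⁻¹ := by
          rw [sum_const, nsmul_eq_mul]
          gcongr
          exact_mod_cast hcard
  have hlarge : ∑ p ∈ P with ¬ p ≤ y, (truncationModulus g y m p : ℝ)⁻¹ ≤
      ∑ p ∈ P with ¬ p ≤ y,
        ((if p.Prime ∧ g p = 0 then (p : ℝ)⁻¹ else 0) + ((p : ℝ) ^ 2)⁻¹) := by
    refine sum_le_sum fun p hp => ?_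
    simp only [P, mem_filter] at hp
    rw [truncationModulus, if_neg hp.2]
    by_cases hgp : g p = 0
    · simp [hgp, hp.1.2]
    · simp [hgp]
  linarith [hy {p ∈ P | ¬ p ≤ y} fun p hp => not_le.1 (mem_filter.1 hp).2]

end Truncation

theorem pretentious_unique_furstenberg_general
    (g : ℕ → ℝ) (hvals : ∀ n, g n = 0 ∨ g n = 1)
    (hmult : g 1 = 1 ∧ ∀ m n : ℕ, Nat.Coprime m n → g (m * n) = g m * g n)
    (hpret : IsPretentious (fun n => (g n : ℂ)))
    (k : ℕ) (h : Fin k → ℕ) :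
    ∃ L : ℝ, Filter.Tendsto
      (fun x : ℕ => (∑ n ∈ Finset.Icc 1 x, ∏ j, g (n + h j)) / (x : ℝ))
      Filter.atTop (nhds L) := by
  obtain ⟨hg1, hmul⟩ := hmult
  have hI : ∀ n, g n ∈ Set.Icc (0 : ℝ) 1 := fun n => by rcases hvals n with hn | hn <;> simp [hn]
  have hsum : Summable fun p : ℕ => if p.Prime ∧ g p = 0 then (p : ℝ)⁻¹ else 0 := by
    simpa using summable_inv_prime_of_isPretentious
      (fun n => by rcases hvals n with hn | hn <;> simp [hn]) hpret
  refine exists_tendsto_of_forall_eventually_dist_le fun ε hε => ?_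
  obtain ⟨y, m, hm, hδ⟩ :=
    exists_sum_inv_truncationModulus_le g hsum (δ := ε / (2 * k + 1)) (by positivity)
  set G : ℕ → ℝ := fun n => g (Nat.gcd (y.factorial ^ m) n)
  have hG : Function.Periodic (fun n => ∏ j, G (n + h j)) (y.factorial ^ m) := by
    simpa using Finset.periodic_prod univ fun j _ =>
      ((Nat.periodic_gcd (y.factorial ^ m)).comp g).add_const (h j)
  refine ⟨_, ⟨_, hG.tendsto_sum_Icc_div (pow_ne_zero _ y.factorial_ne_zero)⟩, ?_⟩
  filter_upwards [eventually_ge_atTop (max (univ.sup h) 1)] with x hx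
  have hx0 : (0 : ℝ) < x := by exact_mod_cast (le_max_right _ _).trans hx
  rw [Real.dist_eq, ← sub_div, abs_div, abs_of_pos hx0, div_le_iff₀ hx0]
  calc _ ≤ ∑ j, (#{n ∈ Icc 1 x | g (n + h j) ≠ G (n + h j)} : ℝ) :=
        abs_sum_prod_sub_sum_prod_le hI (fun n => hI _) h x
    _ ≤ ∑ j, (x + h j : ℝ) * (ε / (2 * k + 1)) := sum_le_sum fun j _ =>
        card_filter_ne_apply_gcd_factorial_pow_le hvals hg1 hmul hm hδ x (h j)
    _ ≤ ∑ j : Fin k, (2 * x : ℝ) * (ε / (2 * k + 1)) := by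
        gcongr with j
        have : (h j : ℝ) ≤ x := by
          exact_mod_cast (le_sup (mem_univ j)).trans ((le_max_left _ _).trans hx)
        linarith
    _ ≤ ε * x := by
        rw [sum_const, card_univ, Fintype.card_fin, nsmul_eq_mul,
          show k * (2 * x * (ε / (2 * k + 1))) = ε * x * (2 * k / (2 * k + 1)) by ring]
        exact mul_le_of_le_one_right (by positivity) ((div_le_one (by positivity)).2 (by linarith))

/-- **Pretentious `{0,1}`-valued multiplicative functions have a unique Furstenberg
system:** all correlation limits `lim_{x→∞} (1/x) ∑_{n ≤ x} g(n+h₁) ⋯ g(n+h_k)` exist. -/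
theorem pretentious_unique_furstenberg
    (g : ℕ → ℝ) (hvals : ∀ n, g n = 0 ∨ g n = 1)
    (hmult : g 1 = 1 ∧ ∀ m n : ℕ, Nat.Coprime m n → g (m * n) = g m * g n)
    (hpret : IsPretentious (fun n => (g n : ℂ)))
    (k : ℕ) (hk : 1 ≤ k) (h : Fin k → ℕ)
    (hh : ∀ j, 0 < h j) (hinj : Function.Injective h) :
    ∃ L : ℝ, Filter.Tendsto
      (fun x : ℕ => (∑ n ∈ Finset.Icc 1 x, ∏ j, g (n + h j)) / (x : ℝ))
      Filter.atTop (nhds L) :=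
  pretentious_unique_furstenberg_general g hvals hmult hpret k h
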